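/- arXiv:2004.02285 — 3 statements merged into one kernel-verified Lean document; each statement's English description precedes it below -/
import Mathlib

section
/- Let G be a finite group, m = (m_1,…,m_s) a tuple of positive integers, and h ∈ G an element of order t. If t does not divide m_i for some i ∈ {1,…,s}, then h has no fixed points in γ(m,G). If t divides every m_i, say m_i = q_i·t, then the number of fixed points of h in γ(m,G) equals ∏_{i=1}^s C(q_i + |G|/t − 1, q_i), where C(·,·) denotes the binomial coefficient. -/
open scoped BigOperators

/-- `γ(m, G)`: the set of functions `a : {1,…,s} × G → ℤ` with `a(i,g) ≥ 0` for all
`(i,g)` and `Σ_{g ∈ G} a(i, g) = m_i` for each `i`. -/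
def gammaSet {s : ℕ} (m : Fin s → ℕ) (G : Type*) [Fintype G] : Type _ :=
  {a : Fin s × G → ℤ // (∀ x, 0 ≤ a x) ∧ ∀ i : Fin s, ∑ g : G, a (i, g) = m i}

/-- The right action of `G` on `γ(m, G)`: `(a · h)(i, g) = a(i, gh)`. -/
def gammaAct {s : ℕ} {m : Fin s → ℕ} {G : Type*} [Group G] [Fintype G]
    (a : gammaSet m G) (h : G) : gammaSet m G :=
  ⟨fun x => a.1 (x.1, x.2 * h),
    ⟨fun x => a.2.1 _, fun i => by
      rw [← a.2.2 i]
      exact Fintype.sum_equiv (Equiv.mulRight h) _ _ (fun g => rfl)⟩⟩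

/-- Stars and bars: counting functions with prescribed sum. -/
lemma card_sum_eq_aux (Q : Type*) [Fintype Q] (n : ℕ) :
    Nat.card {f : Q → ℕ // ∑ c, f c = n} = (n + Fintype.card Q - 1).choose n := by
  classical
  have key : ∀ s : Multiset Q, ∑ c : Q, s.count c = Multiset.card s := by
    intro s
    have := Finsupp.card_toMultiset (Multiset.toFinsupp s)
    rw [Multiset.toFinsupp_toMultiset] at this
    rw [this, Finsupp.sum_fintype]
    · simp [Multiset.toFinsupp_apply]
    · intro i; rfl
  have e : Sym Q n ≃ {f : Q → ℕ // ∑ c, f c = n} := by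
    refine Equiv.subtypeEquiv
      ((Multiset.toFinsupp (α := Q)).toEquiv.trans Finsupp.equivFunOnFinite) ?_
    intro s
    have hs : ∀ c, ((Multiset.toFinsupp (α := Q)).toEquiv.trans
        Finsupp.equivFunOnFinite) s c = s.count c := fun c => rfl
    constructor
    · intro hcard; rw [← hcard]; simp only [hs]; exact key s
    · intro hsum; rw [← hsum]; simp only [hs]; exact (key s).symm
  rw [Nat.card_congr e.symm, Nat.card_eq_fintype_card, Sym.card_sym_eq_choose,
    add_comm n (Fintype.card Q)]

/-- **Lemma (fixed points of the action on `γ(m,G)`).** Let `h ∈ G` have order `t`.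
If `t ∤ m_i` for some `i` then `h` has no fixed points in `γ(m, G)`; if `m_i = q_i t`
for all `i` then the number of fixed points of `h` is `∏_i C(q_i + |G|/t − 1, q_i)`. -/
theorem gammaAct_fixedPoints (G : Type*) [Group G] [Fintype G]
    (s : ℕ) (m : Fin s → ℕ) (hm : ∀ i, 0 < m i) (h : G) (t : ℕ) (ht : orderOf h = t) :
    ((∃ i, ¬ t ∣ m i) → ∀ a : gammaSet m G, gammaAct a h ≠ a) ∧
      (∀ q : Fin s → ℕ, (∀ i, m i = q i * t) →
        Nat.card {a : gammaSet m G // gammaAct a h = a} =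
          ∏ i, (q i + Fintype.card G / t - 1).choose (q i)) := by
  classical
  subst ht
  set t := orderOf h with htdef
  have ht0 : 0 < t := orderOf_pos h
  set H := Subgroup.zpowers h with hHdef
  -- cardinality of the quotient
  have hcardH : Nat.card H = t := Nat.card_zpowers h
  have hcardQ : Fintype.card (G ⧸ H) = Fintype.card G / t := by
    have := Subgroup.card_eq_card_quotient_mul_card_subgroup H
    rw [hcardH] at this
    rw [← Nat.card_eq_fintype_card, ← Nat.card_eq_fintype_card, this,
      Nat.mul_div_cancel _ ht0]
  -- constancy of fixed points on cosets
  have key : ∀ (a : gammaSet m G), gammaAct a h = a →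
      ∀ (i : Fin s) (g g' : G), (QuotientGroup.mk g : G ⧸ H) = QuotientGroup.mk g' →
        a.1 (i, g) = a.1 (i, g') := by
    intro a hfix i g g' hgg'
    have step : ∀ g : G, a.1 (i, g * h) = a.1 (i, g) :=
      fun g => congrFun (congrArg Subtype.val hfix) (i, g)
    have pow : ∀ (n : ℕ) (g : G), a.1 (i, g * h ^ n) = a.1 (i, g) := by
      intro n
      induction n with
      | zero => simp
      | succ k ih =>
        intro g
        rw [pow_succ, ← mul_assoc, step (g * h ^ k), ih g]
    have hmem : g⁻¹ * g' ∈ H := QuotientGroup.eq.mp hgg'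
    have hmem' : g⁻¹ * g' ∈ Submonoid.powers h := mem_powers_iff_mem_zpowers.mpr hmem
    obtain ⟨n, hn⟩ := hmem'
    have hn' : h ^ n = g⁻¹ * g' := hn
    have : g' = g * h ^ n := by rw [hn', mul_inv_cancel_left]
    rw [this, pow n g]
  -- fiber cardinality
  have fibcard : ∀ c : G ⧸ H, Fintype.card {g : G // (QuotientGroup.mk g : G ⧸ H) = c} = t := by
    intro c
    have e : H ≃ {g : G // (QuotientGroup.mk g : G ⧸ H) = c} :=
      { toFun := fun x => ⟨c.out * x.1, by
          rw [QuotientGroup.mk_mul_of_mem _ x.2, QuotientGroup.out_eq']⟩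
        invFun := fun g => ⟨(c.out)⁻¹ * g.1, by
          apply QuotientGroup.eq.mp
          rw [QuotientGroup.out_eq', g.2]⟩
        left_inv := fun x => by ext; simp
        right_inv := fun g => by ext; simp }
    rw [← Fintype.card_congr e, ← Nat.card_eq_fintype_card, hcardH]
  -- fiberwise sum
  have sumfib : ∀ (b : G ⧸ H → ℤ),
      ∑ g : G, b (QuotientGroup.mk g) = (t : ℤ) * ∑ c, b c := by
    intro b
    rw [← Fintype.sum_fiberwise (fun g : G => (QuotientGroup.mk g : G ⧸ H))
      (fun g => b (QuotientGroup.mk g))]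
    rw [Finset.mul_sum]
    refine Finset.sum_congr rfl fun c _ => ?_
    have : ∀ g : {g : G // (QuotientGroup.mk g : G ⧸ H) = c},
        b (QuotientGroup.mk g.1) = b c := fun g => by rw [g.2]
    rw [Finset.sum_congr rfl (fun g _ => this g), Finset.sum_const, Finset.card_univ,
      fibcard c, nsmul_eq_mul]
  -- sum of a fixed point over G in terms of sums over the quotient
  have sumfix : ∀ (a : gammaSet m G), gammaAct a h = a → ∀ i : Fin s,
      (m i : ℤ) = (t : ℤ) * ∑ c : G ⧸ H, a.1 (i, c.out) := by
    intro a hfix i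
    rw [← a.2.2 i, ← sumfib (fun c => a.1 (i, c.out))]
    refine Finset.sum_congr rfl fun g _ => ?_
    exact key a hfix i g _ (QuotientGroup.out_eq' _).symm
  have hdvd : ∀ (a : gammaSet m G), gammaAct a h = a → ∀ i, t ∣ m i := by
    intro a hfix i
    have := sumfix a hfix i
    have : (t : ℤ) ∣ (m i : ℤ) := ⟨_, this⟩
    exact_mod_cast this
  constructor
  · rintro ⟨i, hi⟩ a hfix
    exact hi (hdvd a hfix i)
  · intro q hq
    -- sums over the quotient equal q i
    have sumq : ∀ (a : gammaSet m G) (hfix : gammaAct a h = a) (i : Fin s),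
        ∑ c : G ⧸ H, a.1 (i, c.out) = (q i : ℤ) := by
      intro a hfix i
      have h1 := sumfix a hfix i
      have h2 : (m i : ℤ) = (t : ℤ) * (q i : ℤ) := by
        rw [hq i]; push_cast; ring
      rw [h2] at h1
      have htz : (t : ℤ) ≠ 0 := by exact_mod_cast ht0.ne'
      exact (mul_left_cancel₀ htz h1.symm)
    -- the equivalence with tuples of functions on the quotient
    have e : {a : gammaSet m G // gammaAct a h = a} ≃
        (∀ i : Fin s, {f : G ⧸ H → ℕ // ∑ c, f c = q i}) := by
      refine
        { toFun := fun a i => ⟨fun c => (a.1.1 (i, c.out)).toNat, ?_⟩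
          invFun := fun f => ⟨⟨fun x => ((f x.1).1 (QuotientGroup.mk x.2) : ℤ), ?_, ?_⟩, ?_⟩
          left_inv := ?_
          right_inv := ?_ }
      · -- sum condition for toFun
        have : ((∑ c : G ⧸ H, (a.1.1 (i, c.out)).toNat : ℕ) : ℤ) = (q i : ℤ) := by
          push_cast
          rw [← sumq a.1 a.2 i]
          exact Finset.sum_congr rfl fun c _ => Int.toNat_of_nonneg (a.1.2.1 _)
        exact_mod_cast this
      · -- nonnegativity
        intro x; positivity
      · -- sum condition for invFun
        intro i
        rw [sumfib (fun c => ((f i).1 c : ℤ))]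
        rw [← Nat.cast_sum, (f i).2, hq i]
        push_cast; ring
      · -- fixedness
        apply Subtype.ext
        funext x
        show ((f x.1).1 (QuotientGroup.mk (x.2 * h)) : ℤ) = ((f x.1).1 (QuotientGroup.mk x.2) : ℤ)
        rw [QuotientGroup.mk_mul_of_mem x.2 (Subgroup.mem_zpowers h)]
      · -- left inverse
        intro a
        apply Subtype.ext
        apply Subtype.ext
        funext x
        show ((a.1.1 (x.1, (QuotientGroup.mk x.2 : G ⧸ H).out)).toNat : ℤ) = a.1.1 x
        rw [Int.toNat_of_nonneg (a.1.2.1 _)]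
        exact key a.1 a.2 x.1 _ x.2 (QuotientGroup.out_eq' _)
      · -- right inverse
        intro f
        funext i
        apply Subtype.ext
        funext c
        show (((f i).1 (QuotientGroup.mk ((c : G ⧸ H).out)) : ℤ)).toNat = (f i).1 c
        rw [QuotientGroup.out_eq', Int.toNat_natCast]
    rw [Nat.card_congr e, Nat.card_pi]
    refine Finset.prod_congr rfl fun i _ => ?_
    rw [card_sum_eq_aux, hcardQ]
end

section
/- Let G and H be finite abelian groups. If for every t ∈ ℕ the number of elements of order t in G equals the number of elements of order t in H, then G and H are isomorphic. -/
/-!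
By the structure theorem, a finite abelian group is a product of cyclic groups of prime power
orders `p i ^ e i`. The order statistics determine, for every `n ≠ 0`, the number of solutions
of `x ^ n = 1`, which is `∏ i, gcd (p i ^ e i) n`. For `n = P ^ k` with `P` prime this is
`P ^ ∑_{p i = P} min (e i) k`; the successive differences in `k` of these exponents count the
`i` with `p i = P` and `k < e i`, hence the multiplicity of each prime power `P ^ m` among the
factors. So the two families of prime powers coincide up to reindexing.
-/

open Finset

theorem card_pow_eq_one_eq_sum_card_orderOf_eq {G : Type*} [Group G] [Finite G] {n : ℕ}
    (hn : n ≠ 0) :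
    Nat.card {x : G // x ^ n = 1} = ∑ t ∈ n.divisors, Nat.card {x : G // orderOf x = t} := by
  classical
  have := Fintype.ofFinite G
  simp only [Nat.card_eq_fintype_card, Fintype.card_subtype]
  exact (sum_card_orderOf_eq_card_pow_eq_one hn).symm

theorem MulEquiv.card_pow_eq_one_eq {M N : Type*} [Monoid M] [Monoid N] (e : M ≃* N) (n : ℕ) :
    Nat.card {x : M // x ^ n = 1} = Nat.card {y : N // y ^ n = 1} :=
  Nat.card_congr <| e.toEquiv.subtypeEquiv fun x => by simp [← map_pow]

theorem card_pi_pow_eq_one {ι : Type*} [Fintype ι] (M : ι → Type*) [∀ i, Monoid (M i)] (n : ℕ) :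
    Nat.card {x : ∀ i, M i // x ^ n = 1} = ∏ i, Nat.card {y : M i // y ^ n = 1} := by
  rw [← Nat.card_pi]
  exact Nat.card_congr <|
    (Equiv.subtypeEquivRight fun x => by simp [funext_iff]).trans Equiv.subtypePiEquivPi

theorem card_pow_eq_one_pi_zmod {ι : Type*} [Fintype ι] (q : ι → ℕ) (hq : ∀ i, q i ≠ 0) (n : ℕ) :
    Nat.card {x : ∀ i, Multiplicative (ZMod (q i)) // x ^ n = 1} = ∏ i, (q i).gcd n := by
  rw [card_pi_pow_eq_one]
  refine prod_congr rfl fun i _ => ?_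
  have : NeZero (q i) := ⟨hq i⟩
  exact (IsCyclic.card_powMonoidHom_ker (Multiplicative (ZMod (q i))) n).trans (by simp)

def MulEquiv.piSubtypeOfSubsingleton {ι : Type*} (M : ι → Type*) [∀ i, MulOneClass (M i)]
    (P : ι → Prop) [DecidablePred P] (h : ∀ i, ¬P i → Subsingleton (M i)) :
    (∀ i, M i) ≃* ∀ i : {i // P i}, M i where
  toFun f i := f i
  invFun g i := if hi : P i then g ⟨i, hi⟩ else 1
  left_inv f := funext fun i => by
    by_cases hi : P i
    · simp [hi]
    · exact (h i hi).elim _ _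
  right_inv g := funext fun i => by simp [i.2]
  map_mul' _ _ := rfl

theorem CommGroup.exists_mulEquiv_pi_zmod_prime_pow (G : Type*) [CommGroup G] [Finite G] :
    ∃ (ι : Type) (_ : Fintype ι) (p e : ι → ℕ), (∀ i, (p i).Prime) ∧ (∀ i, e i ≠ 0) ∧
      Nonempty (G ≃* ∀ i, Multiplicative (ZMod (p i ^ e i))) := by
  classical
  obtain ⟨ι, _, p, hp, e, ⟨f⟩⟩ := AddCommGroup.equiv_directSum_zmod_of_finite (Additive G)
  have hG : G ≃* ∀ i, Multiplicative (ZMod (p i ^ e i)) :=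
    MulEquiv.toAdditive.symm <| f.trans <|
      (DirectSum.addEquivProd _).trans (MulEquiv.piMultiplicative _).toAdditiveRight
  have htriv (i : ι) (hi : ¬e i ≠ 0) : Subsingleton (Multiplicative (ZMod (p i ^ e i))) := by
    rw [not_not.mp hi, pow_zero]
    infer_instance
  exact ⟨{i // e i ≠ 0}, inferInstance, fun i => p i, fun i => e i, fun i => hp i, fun i => i.2,
    ⟨hG.trans (MulEquiv.piSubtypeOfSubsingleton _ _ htriv)⟩⟩

theorem nonempty_mulEquiv_pi_zmod_of_equiv {ι κ : Type*} {q : ι → ℕ} {q' : κ → ℕ} (σ : ι ≃ κ)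
    (h : ∀ i, q' (σ i) = q i) :
    Nonempty ((∀ i, Multiplicative (ZMod (q i))) ≃* ∀ j, Multiplicative (ZMod (q' j))) :=
  ⟨(MulEquiv.piMultiplicative _).symm.trans <|
    (AddEquiv.toMultiplicative ((RingEquiv.piCongrRight fun i =>
      ZMod.ringEquivCongr (h i).symm).trans
        (RingEquiv.piCongrLeft (fun j => ZMod (q' j)) σ)).toAddEquiv).trans
    (MulEquiv.piMultiplicative _)⟩

theorem Nat.Prime.gcd_pow_pow {p P : ℕ} (hp : p.Prime) (hP : P.Prime) (e k : ℕ) :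
    (p ^ e).gcd (P ^ k) = if p = P then P ^ min e k else 1 := by
  split_ifs with h
  · subst h
    rcases le_total e k with hek | hke
    · rw [Nat.gcd_eq_left (pow_dvd_pow p hek), min_eq_left hek]
    · rw [Nat.gcd_eq_right (pow_dvd_pow p hke), min_eq_right hke]
  · exact (((Nat.coprime_primes hp hP).mpr h).pow e k).gcd_eq_one

theorem prod_gcd_prime_pow_pow {ι : Type*} (s : Finset ι) {p : ι → ℕ} (hp : ∀ i, (p i).Prime)
    (e : ι → ℕ) {P : ℕ} (hP : P.Prime) (k : ℕ) :
    ∏ i ∈ s, (p i ^ e i).gcd (P ^ k) = P ^ ∑ i ∈ s with p i = P, min (e i) k := by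
  classical
  simp only [(hp _).gcd_pow_pow hP, prod_ite, prod_const_one, mul_one, prod_pow_eq_pow_sum]

namespace Finset

theorem sum_min_succ {ι : Type*} (s : Finset ι) (e : ι → ℕ) (k : ℕ) :
    ∑ i ∈ s, min (e i) (k + 1) = ∑ i ∈ s, min (e i) k + #{i ∈ s | k < e i} := by
  rw [card_filter, ← sum_add_distrib]
  exact sum_congr rfl fun i _ => by split_ifs <;> omega

theorem card_filter_lt_eq_card_filter_eq_add {ι : Type*} (s : Finset ι) (e : ι → ℕ) (k : ℕ) :
    #{i ∈ s | k < e i} = #{i ∈ s | e i = k + 1} + #{i ∈ s | k + 1 < e i} := by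
  rw [card_filter, card_filter, card_filter, ← sum_add_distrib]
  exact sum_congr rfl fun i _ => by split_ifs <;> omega

theorem card_filter_eq_of_sum_min_eq {ι κ : Type*} {s : Finset ι} {t : Finset κ}
    {e : ι → ℕ} {f : κ → ℕ} (he : ∀ i ∈ s, e i ≠ 0) (hf : ∀ j ∈ t, f j ≠ 0)
    (h : ∀ k, ∑ i ∈ s, min (e i) k = ∑ j ∈ t, min (f j) k) (m : ℕ) :
    #{i ∈ s | e i = m} = #{j ∈ t | f j = m} := by
  have hlt (k : ℕ) : #{i ∈ s | k < e i} = #{j ∈ t | k < f j} := by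
    have := sum_min_succ s e k
    have := sum_min_succ t f k
    have := h k
    have := h (k + 1)
    omega
  rcases m with _ | m
  · rw [filter_false_of_mem he, filter_false_of_mem hf, card_empty, card_empty]
  · have := card_filter_lt_eq_card_filter_eq_add s e m
    have := card_filter_lt_eq_card_filter_eq_add t f m
    have := hlt m
    have := hlt (m + 1)
    omega

end Finset

theorem card_fiber_eq_of_prod_gcd_eq {ι κ : Type*} [Fintype ι] [Fintype κ]
    {p e : ι → ℕ} {p' e' : κ → ℕ} (hp : ∀ i, (p i).Prime) (hp' : ∀ j, (p' j).Prime)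
    (he : ∀ i, e i ≠ 0) (he' : ∀ j, e' j ≠ 0)
    (h : ∀ n ≠ 0, ∏ i, (p i ^ e i).gcd n = ∏ j, (p' j ^ e' j).gcd n) (v : ℕ × ℕ) :
    Nat.card {i // (p i, e i) = v} = Nat.card {j // (p' j, e' j) = v} := by
  classical
  obtain ⟨P, m⟩ := v
  have hsum (k : ℕ) : ∑ i with p i = P, min (e i) k = ∑ j with p' j = P, min (e' j) k := by
    by_cases hP : P.Prime
    · apply Nat.pow_right_injective hP.two_le
      simpa only [prod_gcd_prime_pow_pow _ hp _ hP, prod_gcd_prime_pow_pow _ hp' _ hP]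
        using h (P ^ k) (pow_ne_zero k hP.ne_zero)
    · rw [filter_false_of_mem fun i _ (hi : p i = P) => hP (hi ▸ hp i),
        filter_false_of_mem fun j _ (hj : p' j = P) => hP (hj ▸ hp' j), sum_empty, sum_empty]
  simp only [Nat.card_eq_fintype_card, Fintype.card_subtype, Prod.mk.injEq, ← filter_filter]
  exact card_filter_eq_of_sum_min_eq (fun i _ => he i) (fun j _ => he' j) hsum m

/-- Finite abelian groups with the same number of elements of each order are
isomorphic. -/
theorem abelian_orderCount_iso (G : Type*) [CommGroup G] [Finite G]
    (H : Type*) [CommGroup H] [Finite H]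
    (h : ∀ t : ℕ, Nat.card {g : G // orderOf g = t} = Nat.card {x : H // orderOf x = t}) :
    Nonempty (G ≃* H) := by
  obtain ⟨ι, _, p, e, hp, he, ⟨eG⟩⟩ := CommGroup.exists_mulEquiv_pi_zmod_prime_pow G
  obtain ⟨κ, _, p', e', hp', he', ⟨eH⟩⟩ := CommGroup.exists_mulEquiv_pi_zmod_prime_pow H
  have hgcd (n : ℕ) (hn : n ≠ 0) : ∏ i, (p i ^ e i).gcd n = ∏ j, (p' j ^ e' j).gcd n := by
    rw [← card_pow_eq_one_pi_zmod _ (fun i => pow_ne_zero _ (hp i).ne_zero),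
      ← card_pow_eq_one_pi_zmod _ (fun j => pow_ne_zero _ (hp' j).ne_zero),
      ← eG.card_pow_eq_one_eq, ← eH.card_pow_eq_one_eq,
      card_pow_eq_one_eq_sum_card_orderOf_eq hn, card_pow_eq_one_eq_sum_card_orderOf_eq hn]
    exact sum_congr rfl fun t _ => h t
  have hfib (v : ℕ × ℕ) : Nonempty ({i // (p i, e i) = v} ≃ {j // (p' j, e' j) = v}) :=
    Finite.card_eq.mp (card_fiber_eq_of_prod_gcd_eq hp hp' he he' hgcd v)
  let σ : ι ≃ κ := Equiv.ofFiberEquiv fun v => (hfib v).some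
  have hσ (i : ι) : p' (σ i) ^ e' (σ i) = p i ^ e i :=
    congrArg (fun v : ℕ × ℕ => v.1 ^ v.2) (Equiv.ofFiberEquiv_map (fun v => (hfib v).some) i)
  obtain ⟨eZ⟩ := nonempty_mulEquiv_pi_zmod_of_equiv (q := fun i => p i ^ e i)
    (q' := fun j => p' j ^ e' j) σ hσ
  exact ⟨eG.trans (eZ.trans eH.symm)⟩
end

section
/- Let p_1,…,p_k be distinct primes, and for each i let λ_i = (u_{i,1} ≥ … ≥ u_{i,t_i} > 0) be a partition of α_i, and set G = ∏_{i=1}^k (Z_{p_i^{u_{i,1}}} × ⋯ × Z_{p_i^{u_{i,t_i}}}). For a partition λ = (u_1 ≥ … ≥ u_t > 0) of α, define α_λ(s) = α for s > u_1, α_λ(s) = α − (u_1 + ⋯ + u_l) + l·s for 0 ≤ s ≤ u_1 where l is the greatest index with u_l ≥ s, and adopt the convention p^{α_λ(−1)} = 0. Then for every divisor n = p_1^{s_1}⋯p_k^{s_k} of |G|, the number of elements of G of order exactly n equals ∏_{i=1}^k ( p_i^{α_{λ_i}(s_i)} − p_i^{α_{λ_i}(s_i − 1)} ). -/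
open Finset

lemma card_pow_eq_one_zmod (N m : ℕ) (hN : N ≠ 0) :
    Nat.card {z : Multiplicative (ZMod N) // z ^ m = 1} = Nat.gcd m N := by
  haveI : NeZero N := ⟨hN⟩
  have e1 : {z : Multiplicative (ZMod N) // z ^ m = 1} ≃ {x : ZMod N // m • x = 0} := by
    refine (Equiv.subtypeEquiv (Multiplicative.toAdd (α := ZMod N)) fun z => ?_)
    rw [← Multiplicative.toAdd.injective.eq_iff, toAdd_pow, toAdd_one]
  rw [Nat.card_congr e1]
  set f : ZMod N →+ ZMod N := AddMonoidHom.mulLeft (m : ZMod N) with hf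
  have e2 : {x : ZMod N // m • x = 0} ≃ f.ker := by
    refine Equiv.subtypeEquivRight fun x => ?_
    simp [hf, AddMonoidHom.mem_ker, nsmul_eq_mul]
  rw [Nat.card_congr e2]
  have hrange : f.range = AddSubgroup.zmultiples ((m : ℕ) : ZMod N) := by
    ext x
    simp only [AddMonoidHom.mem_range, AddSubgroup.mem_zmultiples_iff]
    constructor
    · rintro ⟨y, rfl⟩
      exact ⟨(y.val : ℤ), by rw [hf]; show _ = (m : ZMod N) * y; rw [zsmul_eq_mul, Int.cast_natCast, ZMod.natCast_val, ZMod.cast_id, mul_comm]⟩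
    · rintro ⟨c, rfl⟩
      exact ⟨(c : ZMod N), by rw [hf]; simp [zsmul_eq_mul, mul_comm]⟩
  have hcard : Nat.card (ZMod N) = Nat.card (ZMod N ⧸ f.ker) * Nat.card f.ker :=
    AddSubgroup.card_eq_card_quotient_mul_card_addSubgroup f.ker
  have hq : Nat.card (ZMod N ⧸ f.ker) = N / N.gcd m := by
    rw [Nat.card_congr (QuotientAddGroup.quotientKerEquivRange f).toEquiv, hrange,
      Nat.card_zmultiples, ZMod.addOrderOf_coe m hN]
  rw [Nat.card_zmod, hq] at hcard
  have hgpos : 0 < N.gcd m := Nat.gcd_pos_of_pos_left m (Nat.pos_of_ne_zero hN)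
  have hdvd : N.gcd m ∣ N := Nat.gcd_dvd_left N m
  have hq0 : N / N.gcd m ≠ 0 := by
    exact Nat.ne_of_gt (Nat.div_pos (Nat.le_of_dvd (Nat.pos_of_ne_zero hN) hdvd) hgpos)
  have := Nat.div_eq_of_eq_mul_right (Nat.pos_of_ne_zero hq0) hcard
  rw [Nat.div_div_self hdvd hN] at this
  rw [← this, Nat.gcd_comm]



lemma gcd_prime_pow {p : ℕ} (hp : p.Prime) (a b : ℕ) :
    Nat.gcd (p ^ a) (p ^ b) = p ^ min a b := by
  rcases le_total a b with h | h
  · rw [Nat.gcd_eq_left (pow_dvd_pow p h), min_eq_left h]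
  · rw [Nat.gcd_eq_right (pow_dvd_pow p h), min_eq_right h]

lemma card_pow_eq_one_pi {τ : ℕ} (v : Fin τ → ℕ) (hv : ∀ j, v j ≠ 0) (m : ℕ) :
    Nat.card {y : ∀ j : Fin τ, Multiplicative (ZMod (v j)) // y ^ m = 1} =
      ∏ j, Nat.gcd m (v j) := by
  have e1 : {y : ∀ j : Fin τ, Multiplicative (ZMod (v j)) // y ^ m = 1} ≃
      {y : ∀ j : Fin τ, Multiplicative (ZMod (v j)) // ∀ j, (y j) ^ m = 1} :=
    Equiv.subtypeEquivRight fun y => by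
      simp [funext_iff, Pi.pow_apply]
  rw [Nat.card_congr (e1.trans (Equiv.subtypePiEquivPi
    (p := fun j (z : Multiplicative (ZMod (v j))) => z ^ m = 1))), Nat.card_pi]
  exact Finset.prod_congr rfl fun j _ => card_pow_eq_one_zmod _ m (hv j)

lemma card_orderOf_eq_prime_pow {p : ℕ} (hp : p.Prime) {τ : ℕ} (v : Fin τ → ℕ) (s : ℕ) :
    Nat.card {y : ∀ j : Fin τ, Multiplicative (ZMod (p ^ v j)) // orderOf y = p ^ s} =
      p ^ (∑ j, min s (v j)) - if s = 0 then 0 else p ^ (∑ j, min (s - 1) (v j)) := by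
  haveI : ∀ j : Fin τ, NeZero (p ^ v j) := fun j => ⟨(pow_pos hp.pos _).ne'⟩
  have hdd : ∀ m : ℕ, Nat.card {y : ∀ j : Fin τ, Multiplicative (ZMod (p ^ v j)) //
      orderOf y ∣ p ^ m} = p ^ (∑ j, min m (v j)) := by
    intro m
    rw [Nat.card_congr (Equiv.subtypeEquivRight fun y =>
      orderOf_dvd_iff_pow_eq_one (n := p ^ m))]
    rw [card_pow_eq_one_pi _ (fun j => (pow_pos hp.pos _).ne') (p ^ m)]
    rw [Finset.prod_congr rfl fun j _ => gcd_prime_pow hp m (v j),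
      Finset.prod_pow_eq_pow_sum]
  rcases Nat.eq_zero_or_pos s with rfl | hs
  · rw [Nat.card_congr (Equiv.subtypeEquivRight fun y => by
      rw [pow_zero, orderOf_eq_one_iff])]
    rw [Nat.card_unique]
    simp
  · rw [if_neg hs.ne']
    have hsub : {y : ∀ j : Fin τ, Multiplicative (ZMod (p ^ v j)) | orderOf y ∣ p ^ (s - 1)} ⊆
        {y | orderOf y ∣ p ^ s} := fun y hy =>
      dvd_trans hy (pow_dvd_pow p (Nat.sub_le s 1))
    have hset : {y : ∀ j : Fin τ, Multiplicative (ZMod (p ^ v j)) | orderOf y = p ^ s} =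
        {y | orderOf y ∣ p ^ s} \ {y | orderOf y ∣ p ^ (s - 1)} := by
      ext y
      simp only [Set.mem_diff, Set.mem_setOf_eq]
      constructor
      · rintro h
        refine ⟨h ▸ dvd_rfl, fun hd => ?_⟩
        rw [h, Nat.pow_dvd_pow_iff_le_right hp.one_lt] at hd
        omega
      · rintro ⟨h1, h2⟩
        obtain ⟨r, hr, heq⟩ := (Nat.dvd_prime_pow hp).mp h1
        rcases eq_or_lt_of_le hr with rfl | hlt
        · exact heq
        · exact absurd (heq ▸ pow_dvd_pow p (Nat.le_sub_one_of_lt hlt)) h2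
    have hcoe : ∀ P : (∀ j : Fin τ, Multiplicative (ZMod (p ^ v j))) → Prop,
        Nat.card {y // P y} = {y | P y}.ncard := fun P => Nat.card_coe_set_eq _
    rw [hcoe, hset, Set.ncard_diff hsub (Set.toFinite _),
      ← hcoe (fun y => orderOf y ∣ p ^ s), ← hcoe (fun y => orderOf y ∣ p ^ (s - 1)),
      hdd s, hdd (s - 1)]


lemma prod_dvd_of_pairwise_coprime {ι : Type*} {m : ℕ} (s : Finset ι) (f : ι → ℕ)
    (hcop : ∀ i ∈ s, ∀ j ∈ s, i ≠ j → Nat.Coprime (f i) (f j))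
    (hdvd : ∀ i ∈ s, f i ∣ m) : ∏ i ∈ s, f i ∣ m := by
  induction s using Finset.cons_induction with
  | empty => simpa using one_dvd m
  | cons a s ha ih =>
    rw [Finset.prod_cons]
    have h1 : f a ∣ m := hdvd a (Finset.mem_cons_self a s)
    have h2 : ∏ i ∈ s, f i ∣ m := ih
      (fun i hi j hj hij => hcop i (Finset.mem_cons_of_mem hi) j (Finset.mem_cons_of_mem hj) hij)
      (fun i hi => hdvd i (Finset.mem_cons_of_mem hi))
    have cop : Nat.Coprime (f a) (∏ i ∈ s, f i) :=
      Nat.Coprime.prod_right fun i hi =>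
        hcop a (Finset.mem_cons_self a s) i (Finset.mem_cons_of_mem hi)
          (fun h => ha (h ▸ hi))
    exact Nat.Coprime.mul_dvd_of_dvd_of_dvd cop h1 h2

lemma le_exp_of_pow_dvd_prod {k : ℕ} {p : Fin k → ℕ} (hp : ∀ i, (p i).Prime)
    (hp_distinct : Function.Injective p) {b : Fin k → ℕ} {i : Fin k} {c : ℕ}
    (h : p i ^ c ∣ ∏ j, p j ^ b j) : c ≤ b i := by
  rw [← Finset.mul_prod_erase Finset.univ _ (Finset.mem_univ i)] at h
  have cop : Nat.Coprime (p i ^ c) (∏ j ∈ Finset.univ.erase i, p j ^ b j) :=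
    Nat.Coprime.prod_right fun j hj =>
      Nat.Coprime.pow _ _ ((Nat.coprime_primes (hp i) (hp j)).mpr
        (fun e => (Finset.ne_of_mem_erase hj) (hp_distinct e).symm))
  have := Nat.Coprime.dvd_of_dvd_mul_right cop h
  exact (Nat.pow_dvd_pow_iff_le_right (hp i).one_lt).mp this

lemma orderOf_pi_eq_prod_iff {k : ℕ} {p : Fin k → ℕ} (hp : ∀ i, (p i).Prime)
    (hp_distinct : Function.Injective p) {t : Fin k → ℕ} {u : ∀ i : Fin k, Fin (t i) → ℕ}
    (sv : Fin k → ℕ)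
    (x : ∀ i : Fin k, ∀ j : Fin (t i), Multiplicative (ZMod (p i ^ u i j))) :
    orderOf x = (∏ i, p i ^ sv i) ↔ ∀ i, orderOf (x i) = p i ^ sv i := by
  haveI : ∀ (i : Fin k) (j : Fin (t i)), NeZero (p i ^ u i j) :=
    fun i j => ⟨(pow_pos (hp i).pos _).ne'⟩
  have hcomp : ∀ (i : Fin k) (m : ℕ), x i ^ m = (x ^ m) i := fun i m => rfl
  have hdvd_comp : ∀ i, orderOf (x i) ∣ orderOf x := fun i => by
    apply orderOf_dvd_of_pow_eq_one
    rw [hcomp, pow_orderOf_eq_one x, Pi.one_apply]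
  have hppow : ∀ i, ∃ r ≤ ∑ j, u i j, orderOf (x i) = p i ^ r := by
    intro i
    have hcard : Nat.card (∀ j : Fin (t i), Multiplicative (ZMod (p i ^ u i j))) =
        p i ^ (∑ j, u i j) := by
      rw [Nat.card_pi]
      rw [Finset.prod_congr rfl fun j _ =>
        (Nat.card_congr (Multiplicative.toAdd (α := ZMod (p i ^ u i j)))).trans
          (Nat.card_zmod _)]
      rw [Finset.prod_pow_eq_pow_sum]
    have := orderOf_dvd_natCard (x i)
    rw [hcard] at this
    exact (Nat.dvd_prime_pow (hp i)).mp this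
  constructor
  · intro h
    choose r hr hre using hppow
    have hrs : ∀ i, r i ≤ sv i := fun i => by
      refine le_exp_of_pow_dvd_prod hp hp_distinct (b := sv) ?_
      rw [← hre, ← h]; exact hdvd_comp i
    have hxm : x ^ (∏ i, p i ^ r i) = 1 := by
      have hc : ∀ i, x i ^ (∏ i, p i ^ r i) = 1 := fun i => by
        rw [← orderOf_dvd_iff_pow_eq_one, hre]
        exact Finset.dvd_prod_of_mem _ (Finset.mem_univ i)
      ext i j
      exact congrFun (hc i) j
    have h1 : (∏ i, p i ^ sv i) ∣ ∏ i, p i ^ r i := by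
      rw [← h]; exact orderOf_dvd_of_pow_eq_one hxm
    have hsr : ∀ i, sv i ≤ r i := fun i =>
      le_exp_of_pow_dvd_prod hp hp_distinct (b := r)
        ((Finset.dvd_prod_of_mem (fun i => p i ^ sv i) (Finset.mem_univ i)).trans h1)
    intro i
    rw [hre i, le_antisymm (hrs i) (hsr i)]
  · intro h
    apply Nat.dvd_antisymm
    · apply orderOf_dvd_of_pow_eq_one
      have hc : ∀ i, x i ^ (∏ i, p i ^ sv i) = 1 := fun i => by
        rw [← orderOf_dvd_iff_pow_eq_one, h i]
        exact Finset.dvd_prod_of_mem _ (Finset.mem_univ i)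
      ext i j
      exact congrFun (hc i) j
    · refine prod_dvd_of_pairwise_coprime _ _ ?_ ?_
      · intro i _ j _ hij
        exact Nat.Coprime.pow _ _ ((Nat.coprime_primes (hp i) (hp j)).mpr
          fun e => hij (hp_distinct e))
      · intro i _
        rw [← h i]; exact hdvd_comp i


lemma aux_A_eq_small {τ : ℕ} (ht : 0 < τ) (u : Fin τ → ℕ)
    (hu_anti : ∀ j j' : Fin τ, j ≤ j' → u j' ≤ u j)
    (s : ℕ) (hle : s ≤ u ⟨0, ht⟩)
    (α : ℕ) (hα : α = ∑ j, u j)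
    (A : ℕ) (hA : ∀ l : Fin τ, s ≤ u l → (∀ j, s ≤ u j → j ≤ l) →
      A = α - (∑ j ∈ Finset.univ.filter (fun j => j ≤ l), u j) + ((l : ℕ) + 1) * s) :
    A = ∑ j, min s (u j) := by
  set F := Finset.univ.filter (fun j : Fin τ => s ≤ u j) with hF
  have hne : F.Nonempty := ⟨⟨0, ht⟩, by simp [hF, hle]⟩
  set l := F.max' hne with hl
  have hl1 : s ≤ u l := (Finset.mem_filter.mp (F.max'_mem hne)).2
  have hl2 : ∀ j, s ≤ u j → j ≤ l := fun j hj =>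
    F.le_max' j (Finset.mem_filter.mpr ⟨Finset.mem_univ j, hj⟩)
  rw [hA l hl1 hl2]
  have hsplit : α = (∑ j ∈ Finset.univ.filter (fun j => j ≤ l), u j) +
      ∑ j ∈ Finset.univ.filter (fun j => ¬ j ≤ l), u j := by
    rw [hα, Finset.sum_filter_add_sum_filter_not]
  rw [hsplit, Nat.add_sub_cancel_left]
  have hmin : ∀ j : Fin τ, min s (u j) = if j ≤ l then s else u j := fun j => by
    by_cases hj : j ≤ l
    · rw [if_pos hj]; exact min_eq_left (le_trans hl1 (hu_anti j l hj))
    · rw [if_neg hj]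
      exact min_eq_right (le_of_lt (lt_of_not_ge fun hs => hj (hl2 j hs)))
  rw [Finset.sum_congr rfl fun j _ => hmin j, Finset.sum_ite, Finset.sum_const,
    smul_eq_mul]
  have hcard : (Finset.univ.filter (fun j : Fin τ => j ≤ l)).card = (l : ℕ) + 1 := by
    rw [show Finset.univ.filter (fun j : Fin τ => j ≤ l) = Finset.Iic l by
      ext j; simp [Finset.mem_Iic], Fin.card_Iic]
  rw [hcard, add_comm]



/-- **Order counting in finite abelian groups.** Let
`G = ∏_i (Z_{p_i^{u_{i,1}}} × ⋯ × Z_{p_i^{u_{i,t_i}}})` for distinct primes `p_i` and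
partitions `λ_i = (u_{i,1} ≥ … ≥ u_{i,t_i} > 0)` of `α_i`. Let `A i = α_{λ_i}` be the
function with `α_λ(s) = α` for `s > u_1` and `α_λ(s) = α − (u_1 + ⋯ + u_l) + l·s` for
`0 ≤ s ≤ u_1`, where `l` is the greatest index with `u_l ≥ s`; the convention
`p^{α_λ(−1)} = 0` is encoded by the `if`-term below. Then for every divisor
`n = p_1^{s_1} ⋯ p_k^{s_k}` of `|G|`, the number of elements of `G` of order exactly
`n` is `∏_i (p_i^{α_{λ_i}(s_i)} − p_i^{α_{λ_i}(s_i − 1)})`. -/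
theorem orderCount_finite_abelian (k : ℕ) (p : Fin k → ℕ) (hp : ∀ i, (p i).Prime)
    (hp_distinct : Function.Injective p)
    (t : Fin k → ℕ) (ht : ∀ i, 0 < t i)
    (u : ∀ i : Fin k, Fin (t i) → ℕ) (hu_pos : ∀ i j, 0 < u i j)
    (hu_anti : ∀ i, ∀ j j' : Fin (t i), j ≤ j' → u i j' ≤ u i j)
    (α : Fin k → ℕ) (hα : ∀ i, α i = ∑ j, u i j)
    (A : Fin k → ℕ → ℕ)
    (hA_large : ∀ (i : Fin k) (s : ℕ), u i ⟨0, ht i⟩ < s → A i s = α i)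
    (hA_small : ∀ (i : Fin k) (s : ℕ) (l : Fin (t i)), s ≤ u i ⟨0, ht i⟩ →
      s ≤ u i l → (∀ j, s ≤ u i j → j ≤ l) →
      A i s = α i - (∑ j ∈ Finset.univ.filter (fun j => j ≤ l), u i j) + ((l : ℕ) + 1) * s)
    (n : ℕ) (sv : Fin k → ℕ) (hn : n = ∏ i, p i ^ sv i)
    (hdvd : n ∣ Nat.card
      (∀ i : Fin k, ∀ j : Fin (t i), Multiplicative (ZMod (p i ^ u i j)))) :
    Nat.card {x : ∀ i : Fin k, ∀ j : Fin (t i), Multiplicative (ZMod (p i ^ u i j)) //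
        orderOf x = n} =
      ∏ i, (p i ^ A i (sv i) - if sv i = 0 then 0 else p i ^ A i (sv i - 1)) := by
  subst hn
  haveI : ∀ (i : Fin k) (j : Fin (t i)), NeZero (p i ^ u i j) :=
    fun i j => ⟨(pow_pos (hp i).pos _).ne'⟩
  have hA_eq : ∀ (i : Fin k) (s : ℕ), A i s = ∑ j, min s (u i j) := by
    intro i s
    rcases lt_or_ge (u i ⟨0, ht i⟩) s with hlt | hle
    · rw [hA_large i s hlt, hα i]
      refine Finset.sum_congr rfl fun j _ => ?_
      have h0 : (⟨0, ht i⟩ : Fin (t i)) ≤ j := by simp [Fin.le_def]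
      exact (min_eq_right (le_of_lt (lt_of_le_of_lt (hu_anti i ⟨0, ht i⟩ j h0) hlt))).symm
    · exact aux_A_eq_small (ht i) (u i) (hu_anti i) s hle (α i) (hα i) (A i s)
        (fun l hl1 hl2 => hA_small i s l hle hl1 hl2)
  rw [Nat.card_congr ((Equiv.subtypeEquivRight fun x =>
      orderOf_pi_eq_prod_iff hp hp_distinct sv x).trans
    (Equiv.subtypePiEquivPi (p := fun i (y : ∀ j : Fin (t i),
      Multiplicative (ZMod (p i ^ u i j))) => orderOf y = p i ^ sv i))), Nat.card_pi]
  refine Finset.prod_congr rfl fun i _ => ?_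
  rw [card_orderOf_eq_prime_pow (hp i) (u i) (sv i), hA_eq i (sv i), hA_eq i (sv i - 1)]
end
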